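/- Let V : ℤ^d → ℝ be p-periodic. For each 1 ≤ j ≤ P, the eigenvalue function E_j : 𝕍 → ℝ is not constant on any nonempty open subset of 𝕍. -/

import Mathlib

noncomputable section

/-- `V : ℤ^d → ℝ` is `p`-periodic. -/
def IsPeriodic {d : ℕ} (p : Fin d → ℕ) (V : (Fin d → ℤ) → ℝ) : Prop :=
  ∀ (n : Fin d → ℤ) (j : Fin d), V (Function.update n j (n j + (p j : ℤ))) = V n

/-- Fourier coefficient `V̂(k)` for `k ∈ 𝔹`. -/
def Vhat {d : ℕ} (p : Fin d → ℕ) (V : (Fin d → ℤ) → ℝ) (k : ∀ j, Fin (p j)) : ℂ :=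
  (∏ j, (p j : ℂ))⁻¹ *
    ∑ n : ∀ j, Fin (p j),
      (V (fun j => (n j : ℤ) + 1) : ℂ) *
        Complex.exp (-(2 * Real.pi * Complex.I) *
          ∑ j, (((k j : ℕ) : ℂ) / (p j : ℂ)) * (((n j : ℕ) : ℂ) + 1))

/-- Floquet matrix `Ĥ_{p,θ}`. -/
def floquet {d : ℕ} (p : Fin d → ℕ) (V : (Fin d → ℤ) → ℝ) (θ : Fin d → ℂ) :
    Matrix (∀ j, Fin (p j)) (∀ j, Fin (p j)) ℂ :=
  fun l m =>
    (if l = m then ∑ j, 2 * Complex.cos (2 * Real.pi * (((l j : ℕ) : ℂ) / (p j : ℂ) + θ j))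
     else 0) + Vhat p V (l - m)

/-- `j`-th smallest eigenvalue (0-indexed), via real parts of roots of `det (λI - A)`. -/
def eig {I : Type*} [Fintype I] [DecidableEq I] (A : Matrix I I ℂ) (j : ℕ) : ℝ :=
  ((A.charpoly.roots.map Complex.re).sort (· ≤ ·)).getD j 0

def Vset {d : ℕ} (p : Fin d → ℕ) : Set (Fin d → ℝ) :=
  {θ | ∀ j, θ j ∈ Set.Ico (0 : ℝ) (1 / (p j : ℝ))}

def Efun {d : ℕ} (p : Fin d → ℕ) (V : (Fin d → ℤ) → ℝ) (j : ℕ) (θ : Fin d → ℝ) : ℝ :=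
  eig (floquet p V fun i => (θ i : ℂ)) j

def Eminus {d : ℕ} (p : Fin d → ℕ) (V : (Fin d → ℤ) → ℝ) (j : ℕ) : ℝ :=
  sInf (Efun p V j '' Vset p)

def Eplus {d : ℕ} (p : Fin d → ℕ) (V : (Fin d → ℤ) → ℝ) (j : ℕ) : ℝ :=
  sSup (Efun p V j '' Vset p)

/-- The bands of `Δ + V` are `δ`-overlapping. -/
def Overlapping {d : ℕ} (p : Fin d → ℕ) (V : (Fin d → ℤ) → ℝ) (δ : ℝ) : Prop :=
  ∀ j : ℕ, j + 1 < ∏ i, p i → Eplus p V j - Eminus p V (j + 1) ≥ δ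


section Aux
open Polynomial Matrix Complex

variable {I : Type*} [Fintype I] [DecidableEq I]

lemma eval_charpoly' (M : Matrix I I ℂ) (μ : ℂ) :
    M.charpoly.eval μ = (Matrix.diagonal (fun _ => μ) - M).det := by
  have : (Polynomial.evalRingHom μ) M.charpoly
      = ((Polynomial.evalRingHom μ).mapMatrix (charmatrix M)).det := by
    rw [Matrix.charpoly, RingHom.map_det]
  rw [show M.charpoly.eval μ = (Polynomial.evalRingHom μ) M.charpoly from rfl, this]
  congr 1
  ext i k
  by_cases h : i = k <;>
    simp [h, charmatrix_apply, Matrix.diagonal, RingHom.mapMatrix_apply, Matrix.map_apply]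

lemma herm_root_real {A : Matrix I I ℂ} (hA : A.IsHermitian) {μ : ℂ}
    (hμ : μ ∈ A.charpoly.roots) : μ = (μ.re : ℂ) := by
  have hroot : A.charpoly.eval μ = 0 := (Polynomial.isRoot_of_mem_roots hμ)
  have hdet : (Matrix.diagonal (fun _ => μ) - A).det = 0 := by
    rw [← eval_charpoly']; exact hroot
  have hspec : μ ∈ spectrum ℂ A := by
    rw [spectrum.mem_iff, Matrix.isUnit_iff_isUnit_det]
    simp only [isUnit_iff_ne_zero, ne_eq, not_not]
    rw [← hdet]
    congr 1
  have hspec2 : μ ∈ spectrum ℂ (Matrix.toEuclideanLin A) := by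
    rwa [Matrix.spectrum_toEuclideanLin (A := A)]
  have hev : Module.End.HasEigenvalue (Matrix.toEuclideanLin A) μ :=
    Module.End.hasEigenvalue_iff_mem_spectrum.mpr hspec2
  have := (Matrix.isHermitian_iff_isSymmetric.1 hA).conj_eigenvalue_eq_self hev
  exact (Complex.conj_eq_iff_re.mp this).symm

lemma card_roots_charpoly (A : Matrix I I ℂ) :
    Multiset.card A.charpoly.roots = Fintype.card I := by
  rw [splits_iff_card_roots.mp (IsAlgClosed.splits _), charpoly_natDegree_eq_dim]


lemma det_zero_of_eig_eq {A : Matrix I I ℂ} (hA : A.IsHermitian) {j : ℕ}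
    (hj : j < Fintype.card I) {c : ℝ} (hc : eig A j = c) :
    (Matrix.diagonal (fun _ : I => (c : ℂ)) - A).det = 0 := by
  have hlen : ((A.charpoly.roots.map Complex.re).sort (· ≤ ·)).length = Fintype.card I := by
    rw [Multiset.length_sort, Multiset.card_map, card_roots_charpoly]
  have hjl : j < ((A.charpoly.roots.map Complex.re).sort (· ≤ ·)).length := hlen ▸ hj
  have hmem : c ∈ (A.charpoly.roots.map Complex.re) := by
    rw [← Multiset.mem_sort (α := ℝ) (· ≤ ·), ← hc]
    rw [eig, List.getD_eq_getElem _ _ hjl]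
    exact List.getElem_mem _
  obtain ⟨μ, hμ, hre⟩ := Multiset.mem_map.mp hmem
  have hμr := herm_root_real hA hμ
  have : μ = (c : ℂ) := by rw [hμr, hre]
  subst this
  have hroot : A.charpoly.eval (c : ℂ) = 0 := Polynomial.isRoot_of_mem_roots hμ
  rw [← eval_charpoly']; exact hroot


lemma fin_sub_add {n : ℕ} (hn : 0 < n) (a b : Fin n) :
    ((a - b : Fin n) : ℕ) + ((b - a : Fin n) : ℕ) = if a = b then 0 else n := by
  rcases eq_or_ne a b with rfl | hab
  · rw [if_pos rfl, Fin.sub_def]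
    simp [Nat.sub_add_cancel a.isLt.le]
  · rw [if_neg hab]
    have hx := a.isLt; have hy := b.isLt
    have hne : (a : ℕ) ≠ (b : ℕ) := fun h => hab (Fin.ext h)
    rw [Fin.sub_def, Fin.sub_def]
    simp only
    rcases lt_or_gt_of_ne hne with h | h
    · have h1 : (n - (b : ℕ) + (a : ℕ)) % n = n - (b : ℕ) + (a : ℕ) :=
        Nat.mod_eq_of_lt (by omega)
      have h2 : (n - (a : ℕ) + (b : ℕ)) % n = (b : ℕ) - (a : ℕ) := by
        have : n - (a : ℕ) + (b : ℕ) = n + ((b : ℕ) - (a : ℕ)) := by omega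
        rw [this, Nat.add_mod_left, Nat.mod_eq_of_lt (by omega)]
      rw [h1, h2]; omega
    · have h1 : (n - (b : ℕ) + (a : ℕ)) % n = (a : ℕ) - (b : ℕ) := by
        have : n - (b : ℕ) + (a : ℕ) = n + ((a : ℕ) - (b : ℕ)) := by omega
        rw [this, Nat.add_mod_left, Nat.mod_eq_of_lt (by omega)]
      have h2 : (n - (a : ℕ) + (b : ℕ)) % n = n - (a : ℕ) + (b : ℕ) :=
        Nat.mod_eq_of_lt (by omega)
      rw [h1, h2]; omega

set_option maxHeartbeats 1000000 in
lemma conj_vhat {d : ℕ} (p : Fin d → ℕ) (hp : ∀ j, 0 < p j) (V : (Fin d → ℤ) → ℝ)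
    (l m : ∀ j, Fin (p j)) :
    (starRingEnd ℂ) (Vhat p V (m - l)) = Vhat p V (l - m) := by
  unfold Vhat
  rw [_root_.map_mul, map_inv₀, map_prod, map_sum]
  simp only [Complex.conj_natCast]
  congr 1
  refine Finset.sum_congr rfl fun n _ => ?_
  rw [_root_.map_mul, Complex.conj_ofReal, ← Complex.exp_conj]
  congr 1
  set S1 : ℂ := ∑ j, (((m - l) j : ℕ) : ℂ) / (p j : ℂ) * (((n j : ℕ) : ℂ) + 1) with hS1
  set S2 : ℂ := ∑ j, (((l - m) j : ℕ) : ℂ) / (p j : ℂ) * (((n j : ℕ) : ℂ) + 1) with hS2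
  have hconjS : (starRingEnd ℂ) S1 = S1 := by
    rw [hS1, map_sum]
    refine Finset.sum_congr rfl fun j _ => ?_
    simp [map_div₀]
  have h1 : (starRingEnd ℂ) (-(2 * (Real.pi : ℂ) * Complex.I) * S1) =
      (2 * (Real.pi : ℂ) * Complex.I) * S1 := by
    rw [_root_.map_mul, hconjS, map_neg, _root_.map_mul, _root_.map_mul, Complex.conj_I,
      Complex.conj_ofReal, map_ofNat]
    ring
  rw [h1, Complex.exp_eq_exp_iff_exp_sub_eq_one]
  set N : ℕ := ∑ j, (if m j = l j then 0 else 1) * ((n j : ℕ) + 1) with hN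
  have hS : S1 + S2 = (N : ℂ) := by
    rw [hS1, hS2, ← Finset.sum_add_distrib, hN]
    push_cast
    refine Finset.sum_congr rfl fun j _ => ?_
    have hj : ((m j - l j : Fin (p j)) : ℕ) + ((l j - m j : Fin (p j)) : ℕ)
        = if m j = l j then 0 else p j := fin_sub_add (hp j) (m j) (l j)
    have hml : (m - l) j = m j - l j := rfl
    have hlm : (l - m) j = l j - m j := rfl
    rw [hml, hlm]
    have hpne : ((p j : ℂ)) ≠ 0 := Nat.cast_ne_zero.mpr (hp j).ne'
    by_cases h : m j = l j
    · rw [if_pos h] at hj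
      have e1 : ((m j - l j : Fin (p j)) : ℕ) = 0 := by omega
      have e2 : ((l j - m j : Fin (p j)) : ℕ) = 0 := by omega
      rw [h] at e2
      rw [h]
      simp [e1, e2]
    · rw [if_neg h] at hj
      rw [if_neg h]
      have : (((m j - l j : Fin (p j)) : ℕ) : ℂ) + ((l j - m j : Fin (p j)) : ℕ)
          = (p j : ℂ) := by exact_mod_cast congrArg (Nat.cast : ℕ → ℂ) hj
      field_simp
      ring_nf
      ring_nf at this
      linear_combination this
  have : 2 * (Real.pi : ℂ) * Complex.I * S1 - -(2 * (Real.pi : ℂ) * Complex.I) * S2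
      = ((N : ℤ) : ℂ) * (2 * (Real.pi : ℂ) * Complex.I) := by
    push_cast
    rw [← hS]; ring
  rw [this]
  exact Complex.exp_int_mul_two_pi_mul_I _


set_option maxHeartbeats 1000000 in
lemma floquet_isHermitian {d : ℕ} (p : Fin d → ℕ) (hp : ∀ j, 0 < p j) (V : (Fin d → ℤ) → ℝ)
    (θ : Fin d → ℝ) : (floquet p V (fun i => (θ i : ℂ))).IsHermitian := by
  refine Matrix.IsHermitian.ext fun l m => ?_
  show (starRingEnd ℂ) (floquet p V (fun i => (θ i : ℂ)) m l) = floquet p V (fun i => (θ i : ℂ)) l m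
  unfold floquet
  rw [map_add, conj_vhat p hp V]
  congr 1
  by_cases h : l = m
  · subst h
    simp only [eq_self_iff_true, if_true]
    rw [map_sum]
    refine Finset.sum_congr rfl fun j _ => ?_
    rw [_root_.map_mul, map_ofNat, ← Complex.cos_conj]
    congr 1
    simp [map_div₀, _root_.map_mul, map_add, map_ofNat, Complex.conj_ofReal, Complex.conj_natCast]
  · rw [if_neg (fun hh => h hh.symm), if_neg h, map_zero]

lemma floquet_det_diff {d : ℕ} (p : Fin d → ℕ) (V : (Fin d → ℤ) → ℝ) (c : ℂ) (i0 : Fin d)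
    (θ0 : Fin d → ℝ) :
    Differentiable ℂ (fun w : ℂ =>
      (Matrix.diagonal (fun _ : ∀ j, Fin (p j) => c) -
        floquet p V (fun i => if i = i0 then w else (θ0 i : ℂ))).det) := by
  have entry : ∀ l m : ∀ j, Fin (p j), Differentiable ℂ (fun w : ℂ =>
      (Matrix.diagonal (fun _ : ∀ j, Fin (p j) => c) -
        floquet p V (fun i => if i = i0 then w else (θ0 i : ℂ))) l m) := by
    intro l m
    have he : (fun w : ℂ =>
        (Matrix.diagonal (fun _ : ∀ j, Fin (p j) => c) -
          floquet p V (fun i => if i = i0 then w else (θ0 i : ℂ))) l m) =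
        fun w : ℂ => (if l = m then c else 0) -
          ((if l = m then ∑ j, 2 * Complex.cos (2 * Real.pi *
              (((l j : ℕ) : ℂ) / (p j : ℂ) + if j = i0 then w else (θ0 j : ℂ))) else 0) +
            Vhat p V (l - m)) := by
      funext w
      rw [Matrix.sub_apply, Matrix.diagonal_apply]
      rfl
    rw [he]
    by_cases h : l = m
    · simp only [if_pos h]
      refine (differentiable_const c).sub (Differentiable.add ?_ (differentiable_const _))
      refine Differentiable.fun_sum fun j _ => ?_
      by_cases hj : j = i0
      · simp only [if_pos hj]
        refine Differentiable.const_mul (Differentiable.ccos ?_) 2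
        exact ((differentiable_const _).add differentiable_id).const_mul _
      · simp only [if_neg hj]
        exact differentiable_const _
    · simp only [if_neg h]
      exact differentiable_const _
  have hdet : (fun w : ℂ =>
      (Matrix.diagonal (fun _ : ∀ j, Fin (p j) => c) -
        floquet p V (fun i => if i = i0 then w else (θ0 i : ℂ))).det) =
      fun w : ℂ => ∑ σ : Equiv.Perm (∀ j, Fin (p j)), ((Equiv.Perm.sign σ : ℤ) : ℂ) *
        ∏ i, (Matrix.diagonal (fun _ : ∀ j, Fin (p j) => c) -
          floquet p V (fun i' => if i' = i0 then w else (θ0 i' : ℂ))) (σ i) i := by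
    funext w
    rw [Matrix.det_apply']
  rw [hdet]
  refine Differentiable.fun_sum fun σ _ => ?_
  exact (Differentiable.fun_finset_prod fun i _ => entry (σ i) i).const_mul _



lemma norm_two_cos_ofReal_le (r : ℝ) : ‖(2 : ℂ) * Complex.cos (r : ℂ)‖ ≤ 2 := by
  rw [← Complex.ofReal_cos, norm_mul]
  simp only [Complex.norm_real, norm_ofNat, Real.norm_eq_abs]
  nlinarith [Real.abs_cos_le_one r, abs_nonneg (Real.cos r)]

lemma exists_det_ne_zero {d : ℕ} (p : Fin d → ℕ) (hp : ∀ j, 0 < p j)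
    (V : (Fin d → ℤ) → ℝ) (c : ℝ) (i0 : Fin d) (θ0 : Fin d → ℝ) :
    ∃ w : ℂ, (Matrix.diagonal (fun _ : ∀ j, Fin (p j) => (c : ℂ)) -
      floquet p V (fun i => if i = i0 then w else (θ0 i : ℂ))).det ≠ 0 := by
  classical
  haveI : ∀ j, NeZero (p j) := fun j => ⟨(hp j).ne'⟩
  set C : ℝ := ∑ k : ∀ j, Fin (p j), ‖Vhat p V k‖ with hC
  have hC0 : 0 ≤ C := Finset.sum_nonneg fun k _ => norm_nonneg _
  set P : ℕ := Fintype.card (∀ j, Fin (p j)) with hP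
  set M : ℝ := |c| + 2 * d + ‖Vhat p V 0‖ + P * C + 1 with hM
  have hM0 : 0 ≤ M := by positivity
  set t : ℝ := M / (2 * Real.pi) with ht
  have ht0 : 0 ≤ t := div_nonneg hM0 (by positivity)
  have h2pit : 2 * Real.pi * t = M := by
    rw [ht]; field_simp
  refine ⟨(t : ℂ) * Complex.I, det_ne_zero_of_sum_row_lt_diag fun l => ?_⟩
  -- off-diagonal bound
  have hoff : ∀ m : ∀ j, Fin (p j), m ≠ l →
      ‖(Matrix.diagonal (fun _ : ∀ j, Fin (p j) => (c : ℂ)) -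
        floquet p V (fun i => if i = i0 then (t : ℂ) * Complex.I else (θ0 i : ℂ))) l m‖ ≤ C := by
    intro m hm
    have hlm : l ≠ m := fun h => hm h.symm
    have : (Matrix.diagonal (fun _ : ∀ j, Fin (p j) => (c : ℂ)) -
        floquet p V (fun i => if i = i0 then (t : ℂ) * Complex.I else (θ0 i : ℂ))) l m
        = -(Vhat p V (l - m)) := by
      rw [Matrix.sub_apply, Matrix.diagonal_apply_ne _ hlm]
      show 0 - ((if l = m then _ else 0) + Vhat p V (l - m)) = _
      rw [if_neg hlm]
      ring
    rw [this, norm_neg]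
    exact Finset.single_le_sum (fun k _ => norm_nonneg (Vhat p V k)) (Finset.mem_univ (l - m))
  have hrow : ∑ m ∈ Finset.univ.erase l,
      ‖(Matrix.diagonal (fun _ : ∀ j, Fin (p j) => (c : ℂ)) -
        floquet p V (fun i => if i = i0 then (t : ℂ) * Complex.I else (θ0 i : ℂ))) l m‖
      ≤ P * C := by
    calc _ ≤ ∑ _m ∈ Finset.univ.erase l, C :=
          Finset.sum_le_sum fun m hm => hoff m (Finset.ne_of_mem_erase hm)
      _ = (Finset.univ.erase l).card * C := by rw [Finset.sum_const, nsmul_eq_mul]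
      _ ≤ P * C := by
          refine mul_le_mul_of_nonneg_right ?_ hC0
          have := Finset.card_erase_le (s := (Finset.univ : Finset (∀ j, Fin (p j)))) (a := l)
          exact_mod_cast le_trans (Nat.cast_le.mpr this) le_rfl
  -- diagonal bound
  have hdiagentry : (Matrix.diagonal (fun _ : ∀ j, Fin (p j) => (c : ℂ)) -
      floquet p V (fun i => if i = i0 then (t : ℂ) * Complex.I else (θ0 i : ℂ))) l l
      = ((c : ℂ) - (∑ j ∈ Finset.univ.erase i0, 2 * Complex.cos (2 * Real.pi *
          (((l j : ℕ) : ℂ) / (p j : ℂ) + if j = i0 then (t : ℂ) * Complex.I else (θ0 j : ℂ)))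
          + Vhat p V (l - l)))
        - 2 * Complex.cos (2 * Real.pi * (((l i0 : ℕ) : ℂ) / (p i0 : ℂ) + (t : ℂ) * Complex.I)) := by
    rw [Matrix.sub_apply, Matrix.diagonal_apply_eq]
    show (c : ℂ) - ((if l = l then _ else 0) + Vhat p V (l - l)) = _
    rw [if_pos rfl, ← Finset.sum_erase_add _ _ (Finset.mem_univ i0)]
    simp only [eq_self_iff_true, if_true]
    ring
  -- estimate the big cosine
  set za : ℝ := ((l i0 : ℕ) : ℝ) / ((p i0 : ℕ) : ℝ) with hza
  set z : ℂ := 2 * (Real.pi : ℂ) * (((l i0 : ℕ) : ℂ) / (p i0 : ℂ) + (t : ℂ) * Complex.I) with hz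
  have hzI : z * Complex.I = ((-(2 * Real.pi * t) : ℝ) : ℂ) + ((2 * Real.pi * za : ℝ) : ℂ) * Complex.I := by
    rw [hz, hza]
    push_cast
    linear_combination (2 * (Real.pi : ℂ) * (t : ℂ)) * Complex.I_mul_I
  have hzI' : -z * Complex.I = ((2 * Real.pi * t : ℝ) : ℂ) + ((-(2 * Real.pi * za) : ℝ) : ℂ) * Complex.I := by
    rw [hz, hza]
    push_cast
    linear_combination (-(2 * (Real.pi : ℂ) * (t : ℂ))) * Complex.I_mul_I
  have habs1 : ‖Complex.exp (z * Complex.I)‖ = Real.exp (-(2 * Real.pi * t)) := by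
    rw [hzI, Complex.norm_exp]
    congr 1
    simp
  have habs2 : ‖Complex.exp (-z * Complex.I)‖ = Real.exp (2 * Real.pi * t) := by
    rw [hzI', Complex.norm_exp]
    congr 1
    simp
  have hcos : 2 * Complex.cos (2 * Real.pi * (((l i0 : ℕ) : ℂ) / (p i0 : ℂ) + (t : ℂ) * Complex.I))
      = Complex.exp (z * Complex.I) + Complex.exp (-z * Complex.I) := by
    rw [← hz, Complex.two_cos]
  have hTnorm : Real.exp M - 1 ≤ ‖(2 : ℂ) * Complex.cos (2 * Real.pi *
      (((l i0 : ℕ) : ℂ) / (p i0 : ℂ) + (t : ℂ) * Complex.I))‖ := by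
    rw [hcos]
    have h1 : ‖Complex.exp (-z * Complex.I)‖ ≤
        ‖Complex.exp (z * Complex.I) + Complex.exp (-z * Complex.I)‖ + ‖Complex.exp (z * Complex.I)‖ := by
      have := norm_sub_le (Complex.exp (z * Complex.I) + Complex.exp (-z * Complex.I)) (Complex.exp (z * Complex.I))
      simpa using this
    have h2 : ‖Complex.exp (z * Complex.I)‖ ≤ 1 := by
      rw [habs1]
      rw [Real.exp_le_one_iff]
      nlinarith [Real.pi_pos]
    rw [habs2, h2pit] at h1
    linarith
  -- other diagonal cosines
  have hrest : ‖∑ j ∈ Finset.univ.erase i0, 2 * Complex.cos (2 * Real.pi *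
      (((l j : ℕ) : ℂ) / (p j : ℂ) + if j = i0 then (t : ℂ) * Complex.I else (θ0 j : ℂ)))‖
      ≤ 2 * d := by
    calc _ ≤ ∑ j ∈ Finset.univ.erase i0, ‖(2 : ℂ) * Complex.cos (2 * Real.pi *
          (((l j : ℕ) : ℂ) / (p j : ℂ) + if j = i0 then (t : ℂ) * Complex.I else (θ0 j : ℂ)))‖ :=
        norm_sum_le _ _
      _ ≤ ∑ _j ∈ Finset.univ.erase i0, 2 := by
          refine Finset.sum_le_sum fun j hj => ?_
          have hji0 : j ≠ i0 := Finset.ne_of_mem_erase hj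
          rw [if_neg hji0]
          have : (2 : ℂ) * Complex.cos (2 * Real.pi * (((l j : ℕ) : ℂ) / (p j : ℂ) + ((θ0 j : ℝ) : ℂ)))
              = 2 * Complex.cos (((2 * Real.pi * (((l j : ℕ) : ℝ) / ((p j : ℕ) : ℝ) + θ0 j) : ℝ) : ℂ)) := by
            push_cast
            ring_nf
          rw [this]
          exact norm_two_cos_ofReal_le _
      _ ≤ 2 * d := by
          rw [Finset.sum_const, nsmul_eq_mul]
          have hcard : ((Finset.univ.erase i0).card : ℝ) ≤ d := by
            have := Finset.card_erase_le (s := (Finset.univ : Finset (Fin d))) (a := i0)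
            have h2 : (Finset.univ : Finset (Fin d)).card = d := by simp
            exact_mod_cast le_trans this (le_of_eq h2)
          nlinarith
  -- conclude
  have hdiag : P * C < ‖(Matrix.diagonal (fun _ : ∀ j, Fin (p j) => (c : ℂ)) -
      floquet p V (fun i => if i = i0 then (t : ℂ) * Complex.I else (θ0 i : ℂ))) l l‖ := by
    rw [hdiagentry]
    have hsub : ‖((c : ℂ) - (∑ j ∈ Finset.univ.erase i0, 2 * Complex.cos (2 * Real.pi *
          (((l j : ℕ) : ℂ) / (p j : ℂ) + if j = i0 then (t : ℂ) * Complex.I else (θ0 j : ℂ)))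
          + Vhat p V (l - l)))‖ ≤ |c| + 2 * d + ‖Vhat p V (l - l)‖ := by
      calc _ ≤ ‖(c : ℂ)‖ + ‖(∑ j ∈ Finset.univ.erase i0, 2 * Complex.cos (2 * Real.pi *
            (((l j : ℕ) : ℂ) / (p j : ℂ) + if j = i0 then (t : ℂ) * Complex.I else (θ0 j : ℂ)))
            + Vhat p V (l - l))‖ := norm_sub_le _ _
        _ ≤ ‖(c : ℂ)‖ + (‖∑ j ∈ Finset.univ.erase i0, 2 * Complex.cos (2 * Real.pi *
            (((l j : ℕ) : ℂ) / (p j : ℂ) + if j = i0 then (t : ℂ) * Complex.I else (θ0 j : ℂ)))‖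
            + ‖Vhat p V (l - l)‖) := by
            have := norm_add_le (∑ j ∈ Finset.univ.erase i0, 2 * Complex.cos (2 * Real.pi *
              (((l j : ℕ) : ℂ) / (p j : ℂ) + if j = i0 then (t : ℂ) * Complex.I else (θ0 j : ℂ))))
              (Vhat p V (l - l))
            linarith
        _ ≤ |c| + 2 * d + ‖Vhat p V (l - l)‖ := by
            rw [Complex.norm_real, Real.norm_eq_abs]
            linarith [hrest]
    have hnorm : Real.exp M - 1 - (|c| + 2 * d + ‖Vhat p V 0‖) ≤
        ‖((c : ℂ) - (∑ j ∈ Finset.univ.erase i0, 2 * Complex.cos (2 * Real.pi *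
          (((l j : ℕ) : ℂ) / (p j : ℂ) + if j = i0 then (t : ℂ) * Complex.I else (θ0 j : ℂ)))
          + Vhat p V (l - l)))
        - 2 * Complex.cos (2 * Real.pi * (((l i0 : ℕ) : ℂ) / (p i0 : ℂ) + (t : ℂ) * Complex.I))‖ := by
      have h3 := norm_sub_norm_le
        ((2 : ℂ) * Complex.cos (2 * Real.pi * (((l i0 : ℕ) : ℂ) / (p i0 : ℂ) + (t : ℂ) * Complex.I)))
        ((c : ℂ) - (∑ j ∈ Finset.univ.erase i0, 2 * Complex.cos (2 * Real.pi *
          (((l j : ℕ) : ℂ) / (p j : ℂ) + if j = i0 then (t : ℂ) * Complex.I else (θ0 j : ℂ)))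
          + Vhat p V (l - l)))
      have hll : (l - l : ∀ j, Fin (p j)) = 0 := sub_self l
      rw [hll] at hsub h3 ⊢
      have h4 : ‖(2 : ℂ) * Complex.cos (2 * Real.pi * (((l i0 : ℕ) : ℂ) / (p i0 : ℂ) + (t : ℂ) * Complex.I))
          - ((c : ℂ) - (∑ j ∈ Finset.univ.erase i0, 2 * Complex.cos (2 * Real.pi *
          (((l j : ℕ) : ℂ) / (p j : ℂ) + if j = i0 then (t : ℂ) * Complex.I else (θ0 j : ℂ)))
          + Vhat p V 0))‖
          = ‖((c : ℂ) - (∑ j ∈ Finset.univ.erase i0, 2 * Complex.cos (2 * Real.pi *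
          (((l j : ℕ) : ℂ) / (p j : ℂ) + if j = i0 then (t : ℂ) * Complex.I else (θ0 j : ℂ)))
          + Vhat p V 0))
          - 2 * Complex.cos (2 * Real.pi * (((l i0 : ℕ) : ℂ) / (p i0 : ℂ) + (t : ℂ) * Complex.I))‖ :=
        norm_sub_rev _ _
      have h5 : ‖((c : ℂ) - (∑ j ∈ Finset.univ.erase i0, 2 * Complex.cos (2 * Real.pi *
          (((l j : ℕ) : ℂ) / (p j : ℂ) + if j = i0 then (t : ℂ) * Complex.I else (θ0 j : ℂ)))
          + Vhat p V 0))‖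
          = ‖(∑ j ∈ Finset.univ.erase i0, 2 * Complex.cos (2 * Real.pi *
          (((l j : ℕ) : ℂ) / (p j : ℂ) + if j = i0 then (t : ℂ) * Complex.I else (θ0 j : ℂ)))
          + Vhat p V 0) - (c : ℂ)‖ := norm_sub_rev _ _
      linarith [hTnorm]
    have hexp : M + 1 ≤ Real.exp M := Real.add_one_le_exp M
    calc (P : ℝ) * C < Real.exp M - 1 - (|c| + 2 * d + ‖Vhat p V 0‖) := by
          rw [hM] at hexp ⊢
          linarith
      _ ≤ _ := hnorm
  exact lt_of_le_of_lt hrow hdiag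

end Aux

set_option maxHeartbeats 1000000 in
/-- **Non-constancy of the band functions.** For `p`-periodic `V` and `0 ≤ j < P`, the
eigenvalue function `E_j : 𝕍 → ℝ` (with `𝕍 = ∏_i [0, 1/p_i)` carrying its subspace
topology) is not constant on any nonempty open subset of `𝕍`. -/
theorem stmt8 {d : ℕ} (hd : 1 ≤ d) (p : Fin d → ℕ) (hp : ∀ j, 0 < p j)
    (V : (Fin d → ℤ) → ℝ) (hV : IsPeriodic p V)
    (j : ℕ) (hj : j < ∏ i, p i) :
    ∀ U : Set (Vset p), IsOpen U → U.Nonempty →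
      ¬ ∃ c : ℝ, ∀ θ ∈ U, Efun p V j (θ : Fin d → ℝ) = c := by
  classical
  intro U hUopen hUne
  rintro ⟨c, hc⟩
  obtain ⟨θA, hθ0U⟩ := hUne
  obtain ⟨W, hWopen, hWU⟩ := isOpen_induced_iff.mp hUopen
  set θ0 : Fin d → ℝ := (θA : Fin d → ℝ) with hθ0
  have hθ0V : θ0 ∈ Vset p := θA.2
  have hθ0W : θ0 ∈ W := by
    have : θA ∈ Subtype.val ⁻¹' W := hWU ▸ hθ0U
    exact this
  obtain ⟨ε, hε, hball⟩ := Metric.isOpen_iff.mp hWopen θ0 hθ0W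
  set i0 : Fin d := ⟨0, hd⟩ with hi0
  have hlt : θ0 i0 < 1 / (p i0 : ℝ) := (hθ0V i0).2
  set δ : ℝ := min (ε / 2) ((1 / (p i0 : ℝ) - θ0 i0) / 2) with hδdef
  have hδ : 0 < δ := lt_min (by linarith) (by linarith)
  set a : ℝ := θ0 i0 with ha
  -- every point of the segment is in U, so the det vanishes there
  have hdetzero : ∀ s : ℝ, s ∈ Set.Ico a (a + δ) →
      (Matrix.diagonal (fun _ : ∀ j', Fin (p j') => (c : ℂ)) -
        floquet p V (fun i => if i = i0 then (s : ℂ) else (θ0 i : ℂ))).det = 0 := by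
    intro s hs
    set θs : Fin d → ℝ := Function.update θ0 i0 s with hθs
    have hθsV : θs ∈ Vset p := by
      intro i
      by_cases h : i = i0
      · subst h
        rw [hθs, Function.update_self]
        constructor
        · exact le_trans (hθ0V i0).1 hs.1
        · have : δ ≤ (1 / (p i0 : ℝ) - θ0 i0) / 2 := min_le_right _ _
          have := hs.2
          rw [ha] at this
          linarith
      · rw [hθs, Function.update_of_ne h]
        exact hθ0V i
    have hθsW : θs ∈ W := by
      apply hball
      rw [Metric.mem_ball]
      rw [dist_pi_lt_iff hε]
      intro i
      by_cases h : i = i0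
      · subst h
        rw [hθs, Function.update_self, Real.dist_eq]
        have h1 : |s - θ0 i0| = s - θ0 i0 := abs_of_nonneg (by linarith [hs.1])
        have h2 : δ ≤ ε / 2 := min_le_left _ _
        have := hs.2
        rw [ha] at this
        linarith
      · rw [hθs, Function.update_of_ne h, dist_self]
        exact hε
    have hmemU : (⟨θs, hθsV⟩ : Vset p) ∈ U := by
      rw [← hWU]
      exact hθsW
    have hEs : Efun p V j θs = c := hc ⟨θs, hθsV⟩ hmemU
    have hherm := floquet_isHermitian p hp V θs
    have hjcard : j < Fintype.card (∀ j', Fin (p j')) := by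
      rw [Fintype.card_pi]
      simpa [Fintype.card_fin] using hj
    have hdz := det_zero_of_eig_eq hherm hjcard hEs
    have harg : (fun i => ((θs i : ℝ) : ℂ)) = fun i => if i = i0 then (s : ℂ) else (θ0 i : ℂ) := by
      funext i
      by_cases h : i = i0
      · subst h
        rw [hθs, Function.update_self, if_pos rfl]
      · rw [hθs, Function.update_of_ne h, if_neg h]
    rw [harg] at hdz
    exact hdz
  -- the entire analytic function
  set f : ℂ → ℂ := fun w =>
    (Matrix.diagonal (fun _ : ∀ j', Fin (p j') => (c : ℂ)) -
      floquet p V (fun i => if i = i0 then w else (θ0 i : ℂ))).det with hf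
  have hfdiff : Differentiable ℂ f := floquet_det_diff p V (c : ℂ) i0 θ0
  -- accumulating zeros
  set u : ℕ → ℂ := fun n => ((a + (δ / 2) * (1 / ((n : ℝ) + 1)) : ℝ) : ℂ) with hu
  have hmemseq : ∀ n : ℕ, (a + (δ / 2) * (1 / ((n : ℝ) + 1))) ∈ Set.Ico a (a + δ) := by
    intro n
    have h1 : 0 < 1 / ((n : ℝ) + 1) := by positivity
    have h2 : 1 / ((n : ℝ) + 1) ≤ 1 := by
      rw [div_le_one (by positivity)]
      simp [Nat.cast_nonneg]
    constructor
    · nlinarith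
    · nlinarith
  have hfu : ∀ n : ℕ, f (u n) = 0 := fun n => hdetzero _ (hmemseq n)
  have hune : ∀ n : ℕ, u n ≠ ((a : ℝ) : ℂ) := by
    intro n h
    have := Complex.ofReal_injective h
    have h1 : 0 < 1 / ((n : ℝ) + 1) := by positivity
    nlinarith [this]
  have htend0 : Filter.Tendsto (fun n : ℕ => a + (δ / 2) * (1 / ((n : ℝ) + 1)))
      Filter.atTop (nhds a) := by
    have h1 : Filter.Tendsto (fun n : ℕ => 1 / ((n : ℝ) + 1)) Filter.atTop (nhds 0) :=
      tendsto_one_div_add_atTop_nhds_zero_nat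
    have h2 := (h1.const_mul (δ / 2)).const_add a
    simpa using h2
  have htend : Filter.Tendsto u Filter.atTop (nhdsWithin ((a : ℝ) : ℂ) {((a : ℝ) : ℂ)}ᶜ) := by
    apply tendsto_nhdsWithin_of_tendsto_nhds_of_eventually_within
    · exact (Complex.continuous_ofReal.tendsto a).comp htend0
    · exact Filter.Eventually.of_forall fun n => hune n
  have hfreq : ∃ᶠ z in nhdsWithin ((a : ℝ) : ℂ) {((a : ℝ) : ℂ)}ᶜ, f z = 0 :=
    htend.frequently (Filter.Frequently.of_forall hfu)
  have hanal : AnalyticOnNhd ℂ f Set.univ :=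
    hfdiff.differentiableOn.analyticOnNhd isOpen_univ
  have hEqOn : Set.EqOn f 0 Set.univ :=
    hanal.eqOn_zero_of_preconnected_of_frequently_eq_zero isPreconnected_univ
      (Set.mem_univ _) hfreq
  obtain ⟨w, hw⟩ := exists_det_ne_zero p hp V c i0 θ0
  exact hw (hEqOn (Set.mem_univ w))

end
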